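/- For a positive integer p and complex numbers c, d with 1-c not a non-positive integer and the Gamma factors defined, Σ_{k=0}^{p-1} (-1)^k C(p-1,k) (1-d)_{k+1}/(1-c)_{k+1} = − Γ(d)Γ(d-c+p-1) / (Γ(d-1)Γ(d-c)(1-c)_p). -/

import Mathlib

open Complex Finset

/-- Pochhammer symbol `(a)_k`. -/
noncomputable def poch (a : ℂ) (k : ℕ) : ℂ := ∏ i ∈ Finset.range k, (a + i)

/-- Digamma function `ψ = Γ'/Γ`. -/
noncomputable def digamma (z : ℂ) : ℂ := deriv Complex.Gamma z / Complex.Gamma z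

/-- Generalized binomial coefficient `C(x,k) = x(x-1)⋯(x-k+1)/k!`. -/
noncomputable def gbinom (x : ℂ) (k : ℕ) : ℂ :=
  (∏ i ∈ Finset.range k, (x - i)) / (Nat.factorial k : ℂ)

/-!
Write `(a)_k` for the rising factorial. Since `(-1)^k (a)_k` is the falling factorial of `-a` and
`(b + k)_{n-k}` is the falling factorial of `b + n - 1`, Vandermonde's convolution for falling
factorials gives `∑ₖ (-1)^k C(n,k) (a)_k (b + k)_{n-k} = (b - a)_n`. Splitting
`(1 - c)_{n+1} = (1 - c)_{k+1} (2 - c + k)_{n-k}` brings the sum over the common denominator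
`(1 - c)_{n+1}` in exactly this shape, with `a = 2 - d`, `b = 2 - c`; on the right-hand side
`Γ(d) / Γ(d - 1) = d - 1` and `Γ(d - c + n) / Γ(d - c) = (d - c)_n`.
-/

namespace Polynomial

theorem descPochhammer_smeval_eq_eval {R : Type*} [CommRing R] (r : R) (n : ℕ) :
    (descPochhammer ℤ n).smeval r = (descPochhammer R n).eval r := by
  rw [descPochhammer_smeval_eq_ascPochhammer, ascPochhammer_smeval_eq_eval,
    descPochhammer_eval_eq_ascPochhammer]

theorem descPochhammer_eval_add {R : Type*} [CommRing R] (r s : R) (n : ℕ) :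
    (descPochhammer R n).eval (r + s) = ∑ k ∈ range (n + 1),
      (n.choose k : R) * (descPochhammer R k).eval r * (descPochhammer R (n - k)).eval s := by
  rw [← descPochhammer_smeval_eq_eval, Ring.descPochhammer_smeval_add n (Commute.all r s),
    Finset.Nat.sum_antidiagonal_eq_sum_range_succ
      (fun i j => (n.choose i : R) * ((descPochhammer ℤ i).smeval r * (descPochhammer ℤ j).smeval s))]
  simp only [descPochhammer_smeval_eq_eval, mul_assoc]

theorem ascPochhammer_eval_sub_eq_sum {R : Type*} [CommRing R] (a b : R) (n : ℕ) :
    (ascPochhammer R n).eval (b - a) = ∑ k ∈ range (n + 1),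
      (-1) ^ k * (n.choose k : R) * (ascPochhammer R k).eval a *
        (ascPochhammer R (n - k)).eval (b + k) := by
  have h := descPochhammer_eval_add (-a) (b + n - 1) n
  rw [descPochhammer_eval_eq_ascPochhammer, show -a + (b + n - 1) - n + 1 = b - a by ring] at h
  rw [h]
  refine sum_congr rfl fun k hk => ?_
  have hkn : k ≤ n := Nat.lt_succ_iff.mp (mem_range.mp hk)
  have hfall : (descPochhammer R k).eval (-a) = (-1) ^ k * (ascPochhammer R k).eval a := by
    rw [← neg_neg a, ascPochhammer_eval_neg_eq_descPochhammer, neg_neg, ← mul_assoc, ← mul_pow,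
      neg_one_mul, neg_neg, one_pow, one_mul]
  rw [hfall, descPochhammer_eval_eq_ascPochhammer, Nat.cast_sub hkn,
    show b + n - 1 - (n - k : R) + 1 = b + k by ring]
  ring

theorem ascPochhammer_add_eval {R : Type*} [CommSemiring R] (x : R) (m n : ℕ) :
    (ascPochhammer R (m + n)).eval x =
      (ascPochhammer R m).eval x * (ascPochhammer R n).eval (x + m) := by
  rw [← ascPochhammer_mul, eval_mul, eval_comp, eval_add, eval_X, eval_natCast]

theorem sum_neg_one_pow_choose_mul_ascPochhammer_div {K : Type*} [Field K] (x y : K) (n : ℕ)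
    (hx : (ascPochhammer K (n + 1)).eval x ≠ 0) :
    ∑ k ∈ range (n + 1), (-1) ^ k * (n.choose k : K) * (ascPochhammer K (k + 1)).eval y /
        (ascPochhammer K (k + 1)).eval x =
      y * (ascPochhammer K n).eval (x - y) / (ascPochhammer K (n + 1)).eval x := by
  have hsplit : ∀ k ∈ range (n + 1), (ascPochhammer K (n + 1)).eval x =
      (ascPochhammer K (k + 1)).eval x * (ascPochhammer K (n - k)).eval (x + 1 + k) := by
    intro k hk
    rw [show x + 1 + k = x + ((k + 1 : ℕ) : K) by push_cast; ring, ← ascPochhammer_add_eval]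
    congr 2
    have := mem_range.mp hk
    omega
  rw [show x - y = (x + 1) - (y + 1) by ring, ascPochhammer_eval_sub_eq_sum, mul_sum, sum_div]
  refine sum_congr rfl fun k hk => ?_
  have hxk : (ascPochhammer K (k + 1)).eval x ≠ 0 := left_ne_zero_of_mul (hsplit k hk ▸ hx)
  have hrest := right_ne_zero_of_mul (hsplit k hk ▸ hx)
  have hy : (ascPochhammer K (k + 1)).eval y = y * (ascPochhammer K k).eval (y + 1) := by
    rw [ascPochhammer_succ_left, eval_mul, eval_comp, eval_add, eval_X, eval_one]
  rw [hsplit k hk, hy]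
  field_simp

end Polynomial

theorem poch_eq_ascPochhammer_eval (a : ℂ) (k : ℕ) : poch a k = (ascPochhammer ℂ k).eval a := by
  induction k with
  | zero => simp [poch]
  | succ k ih => rw [poch, prod_range_succ, ← poch, ih, ascPochhammer_succ_eval]

theorem stmt_3_general (p : ℕ) (hp : 1 ≤ p) (c d : ℂ)
    (hc : ∀ m : ℕ, 1 - c ≠ -(m : ℂ))
    (hd2 : ∀ m : ℕ, d - 1 ≠ -(m : ℂ))
    (hdc : ∀ m : ℕ, d - c ≠ -(m : ℂ)) :
    ∑ k ∈ Finset.range p,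
        (-1 : ℂ) ^ k * (Nat.choose (p - 1) k : ℂ) * poch (1 - d) (k + 1) / poch (1 - c) (k + 1) =
      -(Complex.Gamma d * Complex.Gamma (d - c + p - 1) /
        (Complex.Gamma (d - 1) * Complex.Gamma (d - c) * poch (1 - c) p)) := by
  obtain ⟨n, rfl⟩ : ∃ n, p = n + 1 := ⟨p - 1, by omega⟩
  have hpoch : (ascPochhammer ℂ (n + 1)).eval (1 - c) ≠ 0 := by
    rw [Ne, ascPochhammer_eval_eq_zero_iff]
    rintro ⟨m, -, hm⟩
    exact hc m (by rw [hm, neg_neg])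
  have hΓd : Gamma d = (d - 1) * Gamma (d - 1) := by
    rw [← Gamma_add_one _ (by simpa using hd2 0), sub_add_cancel]
  have hΓdc : Gamma (d - c + ↑(n + 1) - 1) = (ascPochhammer ℂ n).eval (d - c) * Gamma (d - c) := by
    rw [← Gamma_add_nat_div_Gamma_eq _ hdc, div_mul_cancel₀ _ (Gamma_ne_zero hdc)]
    push_cast
    ring_nf
  simp only [poch_eq_ascPochhammer_eval, Nat.add_sub_cancel]
  rw [Polynomial.sum_neg_one_pow_choose_mul_ascPochhammer_div _ _ _ hpoch, sub_sub_sub_cancel_left, hΓd, hΓdc]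
  have hΓd1 := Gamma_ne_zero hd2
  have hΓdc0 := Gamma_ne_zero hdc
  field_simp
  ring

theorem stmt_3 (p : ℕ) (hp : 1 ≤ p) (c d : ℂ)
    (hc : ∀ m : ℕ, 1 - c ≠ -(m : ℂ))
    (hd1 : ∀ m : ℕ, d ≠ -(m : ℂ)) (hd2 : ∀ m : ℕ, d - 1 ≠ -(m : ℂ))
    (hdc : ∀ m : ℕ, d - c ≠ -(m : ℂ)) (hdcp : ∀ m : ℕ, d - c + p - 1 ≠ -(m : ℂ)) :
    ∑ k ∈ Finset.range p,
        (-1 : ℂ) ^ k * (Nat.choose (p - 1) k : ℂ) * poch (1 - d) (k + 1) / poch (1 - c) (k + 1) =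
      -(Complex.Gamma d * Complex.Gamma (d - c + p - 1) /
        (Complex.Gamma (d - 1) * Complex.Gamma (d - c) * poch (1 - c) p)) :=
  stmt_3_general p hp c d hc hd2 hdc
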